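/- For any c ∈ ℝ, ∫₀^∞ exp(−z²)·erf(c·z) dz = arctan(c)/√π. -/

import Mathlib

open MeasureTheory Real

/-- The error function. -/
noncomputable def erf (x : ℝ) : ℝ :=
  (2 / Real.sqrt Real.pi) * ∫ t in (0:ℝ)..x, Real.exp (-t^2)

/-!
Substituting `t = z u` writes `exp (-z²) erf (c z)` as `(2/√π) ∫₀ᶜ z exp (-(1 + u²) z²) du`.
After swapping the integrals, the inner Gaussian moment is `1 / (2 (1 + u²))`, whose integral
over `[0, c]` is `arctan c / 2`.
-/

open Set

lemma integral_Ioi_mul_exp_neg_mul_sq {b : ℝ} (hb : 0 < b) :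
    ∫ r in Ioi (0:ℝ), r * exp (-b * r ^ 2) = (2 * b)⁻¹ := by
  have h := integral_mul_cexp_neg_mul_sq (b := (b : ℂ)) (by simpa using hb)
  rw [← Complex.ofReal_inj, ← integral_complex_ofReal]
  push_cast
  exact h

lemma exp_neg_sq_mul_erf_mul (c z : ℝ) :
    exp (-z ^ 2) * erf (c * z) =
      2 / √π * ∫ u in (0:ℝ)..c, z * exp (-(1 + u ^ 2) * z ^ 2) := by
  have hsubst :
      ∫ t in (0:ℝ)..c * z, exp (-t ^ 2) = z * ∫ u in (0:ℝ)..c, exp (-(z * u) ^ 2) := by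
    simpa [mul_comm z c] using
      (intervalIntegral.smul_integral_comp_mul_left (a := 0) (b := c)
        (fun t => exp (-t ^ 2)) z).symm
  rw [erf, hsubst, ← intervalIntegral.integral_const_mul, ← intervalIntegral.integral_const_mul,
    ← intervalIntegral.integral_const_mul, ← intervalIntegral.integral_const_mul]
  congr 1 with u
  rw [show -(1 + u ^ 2) * z ^ 2 = -z ^ 2 + -(z * u) ^ 2 by ring, exp_add]
  ring

lemma integrable_mul_exp_neg_one_add_sq_mul_sq (ν : Measure ℝ) [IsFiniteMeasure ν] (s : Set ℝ) :
    Integrable (Function.uncurry fun u z => z * exp (-(1 + u ^ 2) * z ^ 2))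
      (ν.prod (volume.restrict s)) := by
  have hdom : Integrable (fun z : ℝ => ‖z * exp (-1 * z ^ 2)‖) (volume.restrict s) :=
    (integrable_mul_exp_neg_mul_sq one_pos).norm.restrict
  refine ((integrable_const (1 : ℝ)).mul_prod hdom).mono' (by fun_prop) (ae_of_all _ ?_)
  rintro ⟨u, z⟩
  simp only [Function.uncurry_apply_pair, one_mul, norm_mul, norm_of_nonneg (exp_pos _).le]
  gcongr
  nlinarith [sq_nonneg (u * z)]

lemma integral_inv_two_mul_one_add_sq (c : ℝ) :
    ∫ u in (0:ℝ)..c, (2 * (1 + u ^ 2))⁻¹ = arctan c / 2 := by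
  simp_rw [mul_inv, intervalIntegral.integral_const_mul, integral_inv_one_add_sq, arctan_zero]
  ring

theorem integral_exp_neg_sq_mul_erf (c : ℝ) :
    ∫ z in Set.Ioi (0:ℝ), Real.exp (-z^2) * erf (c * z) =
      Real.arctan c / Real.sqrt Real.pi := by
  calc ∫ z in Ioi (0:ℝ), exp (-z ^ 2) * erf (c * z)
      = 2 / √π * ∫ u in (0:ℝ)..c, ∫ z in Ioi (0:ℝ), z * exp (-(1 + u ^ 2) * z ^ 2) := by
        simp_rw [exp_neg_sq_mul_erf_mul, integral_const_mul]
        have : IsFiniteMeasure (volume.restrict (uIoc 0 c)) := by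
          rw [uIoc]; infer_instance
        rw [← intervalIntegral_integral_swap (integrable_mul_exp_neg_one_add_sq_mul_sq _ _)]
    _ = 2 / √π * ∫ u in (0:ℝ)..c, (2 * (1 + u ^ 2))⁻¹ := by
        simp_rw [integral_Ioi_mul_exp_neg_mul_sq (by positivity : (0:ℝ) < 1 + _ ^ 2)]
    _ = arctan c / √π := by
        rw [integral_inv_two_mul_one_add_sq]
        ring
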